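/- In the type A_{n−1} root system, the map h ↦ Φ_{I_h} = {ε_i − ε_j : i < j, h(i) < j} is a bijection from Hessenberg functions on {1,…,n} to upper sets of positive roots, i.e., subsets S ⊆ Φ⁺ such that whenever γ ∈ S, δ ∈ Φ⁺, and γ + δ ∈ Φ⁺, one has γ + δ ∈ S. -/
import Mathlib


/-- the standard basis weight `ε_i` of type `A_{n-1}` (0-indexed: `i : Fin n`) -/
def eps (n : ℕ) (i : Fin n) : Fin n → ℤ := fun k => if k = i then 1 else 0

/-- the positive roots of type `A_{n-1}`: `ε_i − ε_j` for `i < j` -/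
def PhiPos (n : ℕ) : Set (Fin n → ℤ) :=
  {v | ∃ i j : Fin n, i < j ∧ v = eps n i - eps n j}

/-- the upper set `Φ_{I_h} = {ε_i − ε_j : i < j, h(i) < j}` attached to a Hessenberg
function `h` -/
def hessRoots (n : ℕ) (h : Fin n → Fin n) : Set (Fin n → ℤ) :=
  {v | ∃ i j : Fin n, i < j ∧ h i < j ∧ v = eps n i - eps n j}

lemma root_eq {n : ℕ} {i j a b : Fin n} (hij : i < j) (hab : a < b)
    (h : eps n i - eps n j = eps n a - eps n b) : i = a ∧ j = b := by
  have hia : i = a := by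
    by_contra hne
    have h1 := congrFun h i
    simp only [Pi.sub_apply, eps, if_pos rfl, if_true, if_neg hij.ne, if_neg hne] at h1
    split_ifs at h1 <;> omega
  subst hia
  have hjb : j = b := by
    by_contra hne
    have h2 := congrFun h j
    simp only [Pi.sub_apply, eps, if_pos rfl, if_true, if_neg hij.ne', if_neg hne] at h2
    omega
  exact ⟨rfl, hjb⟩

lemma sum_root {n : ℕ} {i j k l a b : Fin n} (hij : i < j) (hkl : k < l) (hab : a < b)
    (h : (eps n i - eps n j) + (eps n k - eps n l) = eps n a - eps n b) :
    (j = k ∧ a = i ∧ b = l) ∨ (l = i ∧ a = k ∧ b = j) := by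
  have hik : i ≠ k := by
    intro heq
    subst heq
    have h1 := congrFun h i
    simp only [Pi.add_apply, Pi.sub_apply, eps, if_pos rfl, if_true, if_neg hij.ne,
      if_neg hkl.ne] at h1
    split_ifs at h1 <;> omega
  have hjl : j ≠ l := by
    intro heq
    subst heq
    have h2 := congrFun h j
    simp only [Pi.add_apply, Pi.sub_apply, eps, if_pos rfl, if_true, if_neg hij.ne',
      if_neg hkl.ne'] at h2
    split_ifs at h2 <;> omega
  by_cases hjk : j = k
  · subst hjk
    rw [sub_add_sub_cancel] at h
    obtain ⟨h1, h2⟩ := root_eq (hij.trans hkl) hab h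
    exact Or.inl ⟨rfl, h1.symm, h2.symm⟩
  · by_cases hli : l = i
    · subst hli
      have h' : eps n k - eps n j = eps n a - eps n b := by rw [← h]; ring
      obtain ⟨h1, h2⟩ := root_eq (hkl.trans hij) hab h'
      exact Or.inr ⟨rfl, h1.symm, h2.symm⟩
    · exfalso
      have hil : i ≠ l := fun e => hli e.symm
      have hkj : k ≠ j := fun e => hjk e.symm
      have hia : i = a := by
        by_contra hne
        have h1 := congrFun h i
        simp only [Pi.add_apply, Pi.sub_apply, eps, if_pos rfl, if_true, if_neg hij.ne,
          if_neg hik, if_neg hil, if_neg hne] at h1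
        split_ifs at h1 <;> omega
      have hka : k = a := by
        by_contra hne
        have h2 := congrFun h k
        simp only [Pi.add_apply, Pi.sub_apply, eps, if_pos rfl, if_true, if_neg hik.symm,
          if_neg hkj, if_neg hkl.ne, if_neg hne] at h2
        split_ifs at h2 <;> omega
      exact hik (hia.trans hka.symm)

lemma hess_le {n : ℕ} {h h' : Fin n → Fin n} (hle : ∀ i, i ≤ h i)
    (hsub : hessRoots n h ⊆ hessRoots n h') (i : Fin n) : h' i ≤ h i := by
  by_contra hc
  push_neg at hc
  have hij : i < h' i := lt_of_le_of_lt (hle i) hc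
  have hmem : eps n i - eps n (h' i) ∈ hessRoots n h := ⟨i, h' i, hij, hc, rfl⟩
  obtain ⟨a, b, hab, hb, heq⟩ := hsub hmem
  obtain ⟨ha', hb'⟩ := root_eq hij hab heq
  rw [← ha', ← hb'] at hb
  exact lt_irrefl _ hb

/-- in type `A_{n−1}`, the map `h ↦ Φ_{I_h}` is a bijection from Hessenberg
functions onto upper sets of positive roots (subsets `S ⊆ Φ⁺` such that `γ ∈ S`,
`δ ∈ Φ⁺`, `γ + δ ∈ Φ⁺` imply `γ + δ ∈ S`). -/
theorem stmt6 (n : ℕ) :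
    Set.BijOn (hessRoots n)
      {h : Fin n → Fin n | Monotone h ∧ ∀ i, i ≤ h i}
      {S : Set (Fin n → ℤ) | S ⊆ PhiPos n ∧
        ∀ γ ∈ S, ∀ δ ∈ PhiPos n, γ + δ ∈ PhiPos n → γ + δ ∈ S} := by
  classical
  refine ⟨?_, ?_, ?_⟩
  · -- MapsTo
    rintro h ⟨hmono, hle⟩
    constructor
    · rintro v ⟨i, j, hij, hhij, rfl⟩
      exact ⟨i, j, hij, rfl⟩
    · rintro γ ⟨i, j, hij, hhij, rfl⟩ δ ⟨k, l, hkl, rfl⟩ ⟨a, b, hab, heq⟩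
      rcases sum_root hij hkl hab heq with ⟨hjk, ha, hb⟩ | ⟨hli, ha, hb⟩
      · subst hjk
        exact ⟨i, l, hij.trans hkl, hhij.trans hkl, by rw [heq, ha, hb]⟩
      · subst hli
        refine ⟨k, j, hkl.trans hij, lt_of_le_of_lt (hmono hkl.le) hhij, by rw [heq, ha, hb]⟩
  · -- InjOn
    rintro h ⟨hm, hle⟩ h' ⟨hm', hle'⟩ heq
    funext i
    exact le_antisymm (hess_le hle' heq.ge.subset i) (hess_le hle heq.le.subset i)
  · -- SurjOn
    rintro S ⟨hsub, hup⟩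
    have hup2 : ∀ i j k : Fin n, i < j → j < k → eps n i - eps n j ∈ S →
        eps n i - eps n k ∈ S := by
      intro i j k hij hjk hm
      have hsum : eps n i - eps n j + (eps n j - eps n k) = eps n i - eps n k :=
        sub_add_sub_cancel _ _ _
      have hmem : eps n i - eps n j + (eps n j - eps n k) ∈ PhiPos n := by
        rw [hsum]; exact ⟨i, k, hij.trans hjk, rfl⟩
      have := hup _ hm _ ⟨j, k, hjk, rfl⟩ hmem
      rwa [hsum] at this
    have hup1 : ∀ i j k : Fin n, i < j → j < k → eps n j - eps n k ∈ S →
        eps n i - eps n k ∈ S := by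
      intro i j k hij hjk hm
      have hsum : eps n j - eps n k + (eps n i - eps n j) = eps n i - eps n k := by ring
      have hmem : eps n j - eps n k + (eps n i - eps n j) ∈ PhiPos n := by
        rw [hsum]; exact ⟨i, k, hij.trans hjk, rfl⟩
      have := hup _ hm _ ⟨i, j, hij, rfl⟩ hmem
      rwa [hsum] at this
    set F : Fin n → Finset (Fin n) := fun i =>
      insert i (Finset.univ.filter fun j => i < j ∧ eps n i - eps n j ∉ S) with hF
    have hne : ∀ i, (F i).Nonempty := fun i => ⟨i, Finset.mem_insert_self _ _⟩
    set h : Fin n → Fin n := fun i => (F i).max' (hne i) with hh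
    have hmem : ∀ i, h i ∈ F i := fun i => Finset.max'_mem _ _
    have hlei : ∀ i, i ≤ h i := fun i => Finset.le_max' _ _ (Finset.mem_insert_self _ _)
    have hgt : ∀ i j, h i < j → eps n i - eps n j ∈ S := by
      intro i j hj
      by_contra hno
      have hij : i < j := lt_of_le_of_lt (hlei i) hj
      have : j ∈ F i :=
        Finset.mem_insert_of_mem (Finset.mem_filter.mpr ⟨Finset.mem_univ _, hij, hno⟩)
      exact absurd (Finset.le_max' _ _ this) (not_le.mpr hj)
    have hSgt : ∀ i j, i < j → eps n i - eps n j ∈ S → h i < j := by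
      intro i j hij hm
      by_contra hc
      push_neg at hc
      rcases Finset.mem_insert.mp (hmem i) with he | hf
      · exact absurd (he ▸ hc) hij.not_ge
      · obtain ⟨-, hihi, hnotS⟩ := Finset.mem_filter.mp hf
        rcases lt_or_eq_of_le hc with hlt | heq
        · exact hnotS (hup2 i j (h i) hij hlt hm)
        · exact hnotS (heq ▸ hm)
    have hmono : Monotone h := by
      intro i i' hii'
      rcases eq_or_lt_of_le hii' with rfl | hlt
      · exact le_refl _
      apply Finset.max'_le
      intro x hx
      rcases Finset.mem_insert.mp hx with rfl | hf
      · exact le_trans hii' (hlei i')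
      · obtain ⟨-, hix, hnotS⟩ := Finset.mem_filter.mp hf
        rcases le_or_gt x i' with hxle | hxgt
        · exact hxle.trans (hlei i')
        · have hx' : eps n i' - eps n x ∉ S := fun hm => hnotS (hup1 i i' x hlt hxgt hm)
          exact Finset.le_max' _ _
            (Finset.mem_insert_of_mem (Finset.mem_filter.mpr ⟨Finset.mem_univ _, hxgt, hx'⟩))
    refine ⟨h, ⟨hmono, hlei⟩, ?_⟩
    apply Set.Subset.antisymm
    · rintro v ⟨i, j, hij, hhij, rfl⟩
      exact hgt i j hhij
    · intro v hv
      obtain ⟨i, j, hij, rfl⟩ := hsub hv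
      exact ⟨i, j, hij, hSgt i j hij hv, rfl⟩
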